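/- The total (cause-specific) risk is strictly decreasing in the competing-event hazards even when the main-event hazard is unaffected: define, for hazard sequences h_Y, h_D : {1,…,K} → [0,1], the total risk R(h_Y, h_D) = Σ_{l=1}^{K} h_Y(l)·(1 − h_D(l))·Π_{q=1}^{l−1} (1 − h_Y(q))·(1 − h_D(q)). Suppose h_D and h_D' satisfy h_D(l) ≤ h_D'(l) for all l ∈ {1,…,K} with strict inequality h_D(m) < h_D'(m) at some m, and suppose h_Y(m) > 0, and h_Y(q) < 1, h_D'(q) < 1 for all q < m. Then R(h_Y, h_D') < R(h_Y, h_D). In particular, two treatments sharing the same main-event hazard sequence h_Y but with distinct competing-event hazard sequences can have different total risks, so a treatment can exhibit a nonzero total effect on the main event purely through its effect on the competing event. -/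

import Mathlib

/-!
Raising the competing hazard lowers every factor `(1 - h_Y q)(1 - h_D q)` of the survival
product and the factor `1 - h_D l`, so every summand of the total risk weakly decreases.
At `m` the factor `h_Y m` and the survival product up to `m - 1` are positive, so there the
decrease of `1 - h_D m` is strict.
-/

open Finset

namespace CompetingRisks

variable {R : Type*} [CommRing R] [LinearOrder R] [IsStrictOrderedRing R]

def survival (hY hD : ℕ → R) (n : ℕ) : R :=
  ∏ q ∈ Icc 1 n, (1 - hY q) * (1 - hD q)

def incidenceAt (hY hD : ℕ → R) (l : ℕ) : R :=
  hY l * (1 - hD l) * survival hY hD (l - 1)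

variable {hY hD hD' : ℕ → R} {n l : ℕ}

theorem survival_nonneg (hY1 : ∀ q ∈ Icc 1 n, hY q ≤ 1)
    (hD1 : ∀ q ∈ Icc 1 n, hD q ≤ 1) :
    0 ≤ survival hY hD n :=
  prod_nonneg fun q hq => mul_nonneg (sub_nonneg.2 (hY1 q hq)) (sub_nonneg.2 (hD1 q hq))

theorem survival_pos (hY1 : ∀ q ∈ Icc 1 n, hY q < 1) (hD1 : ∀ q ∈ Icc 1 n, hD q < 1) :
    0 < survival hY hD n :=
  prod_pos fun q hq => mul_pos (sub_pos.2 (hY1 q hq)) (sub_pos.2 (hD1 q hq))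

theorem survival_le_of_le (hY1 : ∀ q ∈ Icc 1 n, hY q ≤ 1)
    (hle : ∀ q ∈ Icc 1 n, hD q ≤ hD' q) (hD'1 : ∀ q ∈ Icc 1 n, hD' q ≤ 1) :
    survival hY hD' n ≤ survival hY hD n :=
  prod_le_prod (fun q hq => mul_nonneg (sub_nonneg.2 (hY1 q hq)) (sub_nonneg.2 (hD'1 q hq)))
    fun q hq => mul_le_mul_of_nonneg_left (sub_le_sub_left (hle q hq) 1) (sub_nonneg.2 (hY1 q hq))

theorem incidenceAt_le_of_le (hYl : 0 ≤ hY l) (hY1 : ∀ q ∈ Icc 1 (l - 1), hY q ≤ 1)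
    (hle : ∀ q ∈ Icc 1 (l - 1), hD q ≤ hD' q) (hD'1 : ∀ q ∈ Icc 1 (l - 1), hD' q ≤ 1)
    (hlel : hD l ≤ hD' l) (hD'l : hD' l ≤ 1) :
    incidenceAt hY hD' l ≤ incidenceAt hY hD l := by
  have hDl : 0 ≤ 1 - hD l := by linarith
  unfold incidenceAt
  calc hY l * (1 - hD' l) * survival hY hD' (l - 1)
      ≤ hY l * (1 - hD l) * survival hY hD' (l - 1) := by
        gcongr
        exact survival_nonneg hY1 hD'1
    _ ≤ hY l * (1 - hD l) * survival hY hD (l - 1) := by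
        gcongr
        exact survival_le_of_le hY1 hle hD'1

theorem incidenceAt_lt_of_lt (hYl : 0 < hY l) (hY1 : ∀ q ∈ Icc 1 (l - 1), hY q < 1)
    (hle : ∀ q ∈ Icc 1 (l - 1), hD q ≤ hD' q) (hD'1 : ∀ q ∈ Icc 1 (l - 1), hD' q < 1)
    (hltl : hD l < hD' l) (hD'l : hD' l ≤ 1) :
    incidenceAt hY hD' l < incidenceAt hY hD l := by
  have hDl : 0 ≤ 1 - hD l := by linarith
  unfold incidenceAt
  calc hY l * (1 - hD' l) * survival hY hD' (l - 1)
      < hY l * (1 - hD l) * survival hY hD' (l - 1) := by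
        gcongr
        exact survival_pos hY1 hD'1
    _ ≤ hY l * (1 - hD l) * survival hY hD (l - 1) := by
        gcongr
        exact survival_le_of_le (fun q hq => (hY1 q hq).le) hle fun q hq => (hD'1 q hq).le

end CompetingRisks

open CompetingRisks

theorem total_risk_strictly_decreasing_in_competing_hazard_general
    (K : ℕ) (hY hD hD' : ℕ → ℝ)
    (hYr : ∀ l ∈ Icc 1 K, hY l ∈ Set.Icc (0 : ℝ) 1)
    (hD'r : ∀ l ∈ Icc 1 K, hD' l ∈ Set.Icc (0 : ℝ) 1)
    (hle : ∀ l ∈ Icc 1 K, hD l ≤ hD' l)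
    (m : ℕ) (hm : m ∈ Icc 1 K) (hstrict : hD m < hD' m)
    (hYm : 0 < hY m)
    (hYlt : ∀ q, 1 ≤ q → q < m → hY q < 1)
    (hD'lt : ∀ q, 1 ≤ q → q < m → hD' q < 1) :
    (∑ l ∈ Icc 1 K, hY l * (1 - hD' l)
        * ∏ q ∈ Icc 1 (l - 1), (1 - hY q) * (1 - hD' q))
      < ∑ l ∈ Icc 1 K, hY l * (1 - hD l)
          * ∏ q ∈ Icc 1 (l - 1), (1 - hY q) * (1 - hD q) := by
  have hprefix : ∀ l ∈ Icc 1 K, Icc 1 (l - 1) ⊆ Icc 1 K := fun l hl =>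
    Icc_subset_Icc_right (by simp only [mem_Icc] at hl; omega)
  have hbefore : ∀ q ∈ Icc 1 (m - 1), 1 ≤ q ∧ q < m := fun q hq => by
    simp only [mem_Icc] at hq hm; omega
  change ∑ l ∈ Icc 1 K, incidenceAt hY hD' l < ∑ l ∈ Icc 1 K, incidenceAt hY hD l
  refine sum_lt_sum (fun l hl => ?_) ⟨m, hm, ?_⟩
  · exact incidenceAt_le_of_le (hYr l hl).1 (fun q hq => (hYr q (hprefix l hl hq)).2)
      (fun q hq => hle q (hprefix l hl hq)) (fun q hq => (hD'r q (hprefix l hl hq)).2)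
      (hle l hl) (hD'r l hl).2
  · exact incidenceAt_lt_of_lt hYm (fun q hq => hYlt q (hbefore q hq).1 (hbefore q hq).2)
      (fun q hq => hle q (hprefix m hm hq))
      (fun q hq => hD'lt q (hbefore q hq).1 (hbefore q hq).2) hstrict (hD'r m hm).2

theorem total_risk_strictly_decreasing_in_competing_hazard
    (K : ℕ) (hY hD hD' : ℕ → ℝ)
    (hYr : ∀ l ∈ Icc 1 K, hY l ∈ Set.Icc (0 : ℝ) 1)
    (hDr : ∀ l ∈ Icc 1 K, hD l ∈ Set.Icc (0 : ℝ) 1)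
    (hD'r : ∀ l ∈ Icc 1 K, hD' l ∈ Set.Icc (0 : ℝ) 1)
    (hle : ∀ l ∈ Icc 1 K, hD l ≤ hD' l)
    (m : ℕ) (hm : m ∈ Icc 1 K) (hstrict : hD m < hD' m)
    (hYm : 0 < hY m)
    (hYlt : ∀ q, 1 ≤ q → q < m → hY q < 1)
    (hD'lt : ∀ q, 1 ≤ q → q < m → hD' q < 1) :
    (∑ l ∈ Icc 1 K, hY l * (1 - hD' l)
        * ∏ q ∈ Icc 1 (l - 1), (1 - hY q) * (1 - hD' q))
      < ∑ l ∈ Icc 1 K, hY l * (1 - hD l)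
          * ∏ q ∈ Icc 1 (l - 1), (1 - hY q) * (1 - hD q) :=
  total_risk_strictly_decreasing_in_competing_hazard_general K hY hD hD' hYr hD'r hle m hm hstrict
    hYm hYlt hD'lt
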